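/- arXiv:1312.0811 — 2 statements merged into one kernel-verified Lean document; each statement's English description precedes it below -/
import Mathlib

section
/- Fix u₀ ∈ K. Then there exists a constant C'' ≥ 0, depending only on c, C₀, R₀, q and ‖u₀‖, such that −C'' ( 1 + ‖z‖^p ) ≤ h(z) ≤ C'' ( 1 + ‖z‖ ) for all z ∈ Ξ. -/
/-!
Testing `u₀` in the infimum gives the upper bound, since `g` and `R` grow at most like
`1 + ‖u₀‖^q` and `1 + ‖u₀‖`. For the lower bound, `⟪z, R u⟫ ≥ -c ‖z‖ (1 + ‖u‖)`; the dangerous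
term `c ‖z‖ ‖u‖` is absorbed by the coercivity `C₀ ‖u‖^q ≤ g u` through Young's inequality
with the conjugate exponent `p`, leaving `A ‖z‖^p`, while on the ball `‖u‖ < R₀` it is at most
`c (1 + R₀) ‖z‖`.
-/

open Real

lemma Real.le_one_add_rpow {s p : ℝ} (hs : 0 ≤ s) (hp : 1 ≤ p) : s ≤ 1 + s ^ p := by
  rcases le_total s 1 with hs1 | hs1
  · linarith [rpow_nonneg hs p]
  · linarith [self_le_rpow_of_one_le hs1 hp]

lemma Real.exists_young_inequality_weighted {q p k ε : ℝ} (hpq : q.HolderConjugate p)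
    (hk : 0 ≤ k) (hε : 0 < ε) :
    ∃ A, 0 ≤ A ∧ ∀ a b : ℝ, 0 ≤ a → 0 ≤ b → k * a * b ≤ ε * a ^ q + A * b ^ p := by
  have hq0 : 0 < q := hpq.pos
  set D := (q * ε) ^ (1 / q)
  have hD0 : 0 < D := rpow_pos_of_pos (by positivity) _
  have hDq : D ^ q = q * ε := by
    rw [← rpow_mul (by positivity), one_div_mul_cancel hq0.ne', rpow_one]
  refine ⟨(k / D) ^ p / p, by have := hpq.symm.pos; positivity, fun a b ha hb => ?_⟩
  have hY := young_inequality_of_nonneg (mul_nonneg hD0.le ha)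
    (mul_nonneg (div_nonneg hk hD0.le) hb) hpq
  rw [mul_rpow hD0.le ha, hDq, mul_rpow (div_nonneg hk hD0.le) hb] at hY
  calc k * a * b = D * a * (k / D * b) := by field_simp
    _ ≤ q * ε * a ^ q / q + (k / D) ^ p * b ^ p / p := hY
    _ = ε * a ^ q + (k / D) ^ p / p * b ^ p := by field_simp

/-- The real-variable form of the lower bound: `t = ‖u‖`, `s = ‖z‖`, `G = g u`, `r = ‖R u‖`. -/
lemma exists_lower_bound_of_coercive {c C₀ R₀ q p : ℝ} (hpq : q.HolderConjugate p)
    (hc : 0 ≤ c) (hC₀ : 0 < C₀) :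
    ∃ B, 0 ≤ B ∧ ∀ t s G r : ℝ, 0 ≤ t → 0 ≤ s → 0 ≤ G → (R₀ ≤ t → C₀ * t ^ q ≤ G) →
      r ≤ c * (1 + t) → -B * (1 + s ^ p) ≤ G - s * r := by
  obtain ⟨A, hA0, hyoung⟩ := exists_young_inequality_weighted hpq hc hC₀
  refine ⟨max (c * (1 + R₀)) (c + A), le_max_of_le_right (by positivity),
    fun t s G r ht hs hG hcoer hr => ?_⟩
  have hsp : s ≤ 1 + s ^ p := le_one_add_rpow hs hpq.symm.lt.le
  have hsr : s * r ≤ s * (c * (1 + t)) := mul_le_mul_of_nonneg_left hr hs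
  rcases lt_or_ge t R₀ with htR | htR
  · have hcR : 0 ≤ c * (1 + R₀) := mul_nonneg hc (by linarith)
    calc -max (c * (1 + R₀)) (c + A) * (1 + s ^ p) ≤ -(c * (1 + R₀) * (1 + s ^ p)) := by
          nlinarith [le_max_left (c * (1 + R₀)) (c + A)]
      _ ≤ -(c * (1 + R₀) * s) := by gcongr
      _ ≤ -(s * (c * (1 + t))) := by
          nlinarith [mul_nonneg (mul_nonneg hc hs) (sub_nonneg.2 htR.le)]
      _ ≤ G - s * r := by linarith
  · calc -max (c * (1 + R₀)) (c + A) * (1 + s ^ p) ≤ -((c + A) * (1 + s ^ p)) := by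
          nlinarith [le_max_right (c * (1 + R₀)) (c + A)]
      _ ≤ C₀ * t ^ q - s * (c * (1 + t)) := by
          linarith [hyoung t s ht hs, mul_le_mul_of_nonneg_left hsp hc]
      _ ≤ G - s * r := by linarith [hcoer htR]

lemma add_mul_le_of_growth_bounds {c ν q s G r : ℝ} (hc : 0 ≤ c) (hν : 0 ≤ ν) (hs : 0 ≤ s)
    (hG : G ≤ c * (1 + ν ^ q)) (hr : r ≤ c * (1 + ν)) :
    G + s * r ≤ (c * (1 + ν ^ q) + c * (1 + ν)) * (1 + s) := by
  have hνq : 0 ≤ ν ^ q := rpow_nonneg hν q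
  nlinarith [mul_le_mul_of_nonneg_left hr hs, mul_nonneg (mul_nonneg hc hνq) hs]

theorem hamiltonian_growth_bounds_general (c C₀ R₀ q ν : ℝ)
    (hq1 : 1 < q) (hc : 0 < c) (hC₀ : 0 < C₀) :
    ∃ C'' : ℝ, 0 ≤ C'' ∧
      ∀ (U : Type*) [NormedAddCommGroup U] [NormedSpace ℝ U]
        (Ξ : Type*) [NormedAddCommGroup Ξ] [InnerProductSpace ℝ Ξ]
        (K : Set U) (u₀ : U), u₀ ∈ K → ‖u₀‖ = ν →
      ∀ (g : U → ℝ) (R : U → Ξ),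
        (∀ u, 0 ≤ g u) → (∀ u, g u ≤ c * (1 + ‖u‖ ^ q)) →
        (∀ u ∈ K, R₀ ≤ ‖u‖ → C₀ * ‖u‖ ^ q ≤ g u) →
        (∀ u, ‖R u‖ ≤ c * (1 + ‖u‖)) →
        ∀ z : Ξ,
          -C'' * (1 + ‖z‖ ^ (q / (q - 1)))
              ≤ sInf ((fun v => g v + (inner ℝ z (R v) : ℝ)) '' K) ∧
          sInf ((fun v => g v + (inner ℝ z (R v) : ℝ)) '' K) ≤ C'' * (1 + ‖z‖) := by
  have hpq : q.HolderConjugate (q / (q - 1)) := HolderConjugate.conjExponent hq1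
  obtain ⟨B, hB0, hlower⟩ := exists_lower_bound_of_coercive (R₀ := R₀) hpq hc.le hC₀
  set Cu := c * (1 + ν ^ q) + c * (1 + ν)
  refine ⟨max B Cu, le_max_of_le_left hB0, ?_⟩
  intro U _ _ Ξ _ _ K u₀ hu₀ hν g R hg0 hgub hglb hRub z
  subst hν
  have hz : 0 ≤ ‖z‖ := norm_nonneg z
  have hbound : ∀ v ∈ K, -B * (1 + ‖z‖ ^ (q / (q - 1))) ≤ g v + inner ℝ z (R v) := by
    intro v hv
    have hinner := real_inner_le_norm (-z) (R v)
    rw [inner_neg_left, norm_neg] at hinner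
    linarith [hlower ‖v‖ ‖z‖ (g v) ‖R v‖ (norm_nonneg v) hz (hg0 v) (hglb v hv) (hRub v)]
  have hzp : 0 ≤ 1 + ‖z‖ ^ (q / (q - 1)) := by positivity
  constructor
  · refine le_csInf ⟨_, u₀, hu₀, rfl⟩ ?_
    rintro _ ⟨v, hv, rfl⟩
    nlinarith [hbound v hv, le_max_left B Cu]
  · calc sInf ((fun v => g v + (inner ℝ z (R v) : ℝ)) '' K)
        ≤ g u₀ + inner ℝ z (R u₀) := csInf_le ⟨_, by rintro _ ⟨v, hv, rfl⟩; exact hbound v hv⟩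
          ⟨u₀, hu₀, rfl⟩
      _ ≤ g u₀ + ‖z‖ * ‖R u₀‖ := by gcongr; exact real_inner_le_norm z (R u₀)
      _ ≤ Cu * (1 + ‖z‖) :=
          add_mul_le_of_growth_bounds hc.le (norm_nonneg u₀) hz (hgub u₀) (hRub u₀)
      _ ≤ max B Cu * (1 + ‖z‖) := by gcongr; exact le_max_right B Cu

/-- two-sided growth bounds for the Hamiltonian
`h(z) = inf_{u ∈ K} (g(u) + ⟪z, R(u)⟫)`: given `u₀ ∈ K`, there is a constant
`C'' ≥ 0`, depending only on `c`, `C₀`, `R₀`, `q` and `‖u₀‖`, such that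
`-C'' (1 + ‖z‖^p) ≤ h(z) ≤ C'' (1 + ‖z‖)` for all `z`, where `p = q/(q-1)`. -/
theorem hamiltonian_growth_bounds (c C₀ R₀ q ν : ℝ)
    (hq1 : 1 < q) (hq2 : q ≤ 2) (hc : 0 < c) (hC₀ : 0 < C₀) (hR₀ : 0 < R₀) :
    ∃ C'' : ℝ, 0 ≤ C'' ∧
      ∀ (U : Type*) [NormedAddCommGroup U] [NormedSpace ℝ U]
        (Ξ : Type*) [NormedAddCommGroup Ξ] [InnerProductSpace ℝ Ξ]
        (K : Set U) (u₀ : U), u₀ ∈ K → ‖u₀‖ = ν →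
      ∀ (g : U → ℝ) (R : U → Ξ),
        (∀ u, 0 ≤ g u) → (∀ u, g u ≤ c * (1 + ‖u‖ ^ q)) →
        (∀ u ∈ K, R₀ ≤ ‖u‖ → C₀ * ‖u‖ ^ q ≤ g u) →
        (∀ u, ‖R u‖ ≤ c * (1 + ‖u‖)) →
        ∀ z : Ξ,
          -C'' * (1 + ‖z‖ ^ (q / (q - 1)))
              ≤ sInf ((fun v => g v + (inner ℝ z (R v) : ℝ)) '' K) ∧
          sInf ((fun v => g v + (inner ℝ z (R v) : ℝ)) '' K) ≤ C'' * (1 + ‖z‖) :=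
  hamiltonian_growth_bounds_general c C₀ R₀ q ν hq1 hc hC₀
end

section
/- Let r ≥ 0 and let f : H → ℝ be continuous and satisfy |f(x) − f(x')| ≤ ( c + (β/2)‖x‖^r + (β/2)‖x'‖^r ) ‖x − x'‖ for all x, x' ∈ H, where c, β ≥ 0 are constants. Then the regularization f̃ satisfies |f̃(x) − f̃(x')| ≤ ( c + (β/2)(‖x‖ + δ)^r + (β/2)(‖x'‖ + δ)^r ) ‖x − x'‖ for all x, x' ∈ H. -/
/-!
Translating by `Pₙ x`, `f̃(x) = ∫ ρ(z) f(ιₙ(z + Pₙ x)) dz`. Since `ιₙ` is an isometry and `Pₙ` is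
a linear contraction (Bessel), on the support of `ρ` the points `u = ιₙ(z + Pₙ x)` and
`u' = ιₙ(z + Pₙ x')` satisfy `‖u‖ ≤ ‖x‖ + δ`, `‖u'‖ ≤ ‖x'‖ + δ` and `‖u - u'‖ ≤ ‖x - x'‖`, so the
modulus of `f` bounds `|f u - f u'|` by the claimed right-hand side; averaging against the
probability density `ρ` preserves the bound.
-/

open MeasureTheory

/-- `Pn x = (⟪x, e 0⟫, …, ⟪x, e (n-1)⟫) ∈ ℝⁿ`. -/
noncomputable def projCoeff {H : Type*} [NormedAddCommGroup H] [InnerProductSpace ℝ H]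
    (e : ℕ → H) (n : ℕ) (x : H) : EuclideanSpace ℝ (Fin n) :=
  WithLp.toLp 2 (fun i => (inner ℝ x (e (i : ℕ)) : ℝ))

/-- `ιn y = Σ_{i<n} y i • e i ∈ H`. -/
noncomputable def embedCoeff {H : Type*} [NormedAddCommGroup H] [InnerProductSpace ℝ H]
    (e : ℕ → H) (n : ℕ) (y : EuclideanSpace ℝ (Fin n)) : H :=
  ∑ i : Fin n, y i • e (i : ℕ)

/-- The regularization `f̃(x) = ∫_{ℝⁿ} ρ(y - Pn x) f(ιn y) dy` of `f : H → ℝ`. -/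
noncomputable def regularization {H : Type*} [NormedAddCommGroup H] [InnerProductSpace ℝ H]
    (e : ℕ → H) (n : ℕ) (ρ : EuclideanSpace ℝ (Fin n) → ℝ) (f : H → ℝ) (x : H) : ℝ :=
  ∫ y : EuclideanSpace ℝ (Fin n), ρ (y - projCoeff e n x) * f (embedCoeff e n y)

section Averaging

variable {X : Type*} [MeasurableSpace X] {μ : Measure X} {ρ : X → ℝ}

theorem abs_integral_mul_le_of_abs_le_on_support (hρ : ∀ x, 0 ≤ ρ x) (hρi : Integrable ρ μ)
    (hρ1 : ∫ x, ρ x ∂μ = 1) {g : X → ℝ} {M : ℝ} (hg : ∀ x, ρ x ≠ 0 → |g x| ≤ M) :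
    |∫ x, ρ x * g x ∂μ| ≤ M := by
  have hpt : ∀ x, ‖ρ x * g x‖ ≤ M * ρ x := fun x => by
    rcases eq_or_ne (ρ x) 0 with h0 | h0
    · simp [h0]
    · rw [norm_mul, Real.norm_of_nonneg (hρ x), Real.norm_eq_abs, mul_comm]
      exact mul_le_mul_of_nonneg_right (hg x h0) (hρ x)
  calc |∫ x, ρ x * g x ∂μ| ≤ ∫ x, M * ρ x ∂μ :=
        norm_integral_le_of_norm_le (hρi.const_mul M) (.of_forall hpt)
    _ = M := by rw [integral_const_mul, hρ1, mul_one]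

theorem MeasureTheory.Integrable.mul_continuous_of_support_subset [TopologicalSpace X]
    [T2Space X] [OpensMeasurableSpace X] [SecondCountableTopologyEither X ℝ] (hρ : Integrable ρ μ)
    {K : Set X} (hK : IsCompact K) (hρK : Function.support ρ ⊆ K) {g : X → ℝ}
    (hg : Continuous g) : Integrable (fun x => ρ x * g x) μ := by
  refine (integrableOn_iff_integrable_of_support_subset ?_).1
    (hρ.integrableOn.mul_continuousOn hg.continuousOn hK)
  exact (Function.support_mul_subset_left _ _).trans hρK

end Averaging

section Coefficients

variable {H : Type*} [NormedAddCommGroup H] [InnerProductSpace ℝ H] {e : ℕ → H} {n : ℕ}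

theorem norm_embedCoeff (he : Orthonormal ℝ e) (y : EuclideanSpace ℝ (Fin n)) :
    ‖embedCoeff e n y‖ = ‖y‖ := by
  have he' : Orthonormal ℝ (fun i : Fin n => e i) := he.comp _ Fin.val_injective
  refine (sq_eq_sq₀ (norm_nonneg _) (norm_nonneg _)).1 ?_
  rw [← real_inner_self_eq_norm_sq, ← real_inner_self_eq_norm_sq, embedCoeff,
    he'.inner_sum, PiLp.inner_apply]
  simp [sq]

theorem norm_projCoeff_le (he : Orthonormal ℝ e) (x : H) : ‖projCoeff e n x‖ ≤ ‖x‖ := by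
  refine (sq_le_sq₀ (norm_nonneg _) (norm_nonneg _)).1 ?_
  calc ‖projCoeff e n x‖ ^ 2 = ∑ i ∈ Finset.range n, ‖inner ℝ (e i) x‖ ^ 2 := by
        rw [EuclideanSpace.norm_sq_eq, ← Fin.sum_univ_eq_sum_range]
        simp [projCoeff, real_inner_comm]
    _ ≤ ‖x‖ ^ 2 := he.sum_inner_products_le x

theorem embedCoeff_sub (e : ℕ → H) (a b : EuclideanSpace ℝ (Fin n)) :
    embedCoeff e n (a - b) = embedCoeff e n a - embedCoeff e n b := by
  simp [embedCoeff, sub_smul, Finset.sum_sub_distrib]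

theorem projCoeff_sub (e : ℕ → H) (x x' : H) :
    projCoeff e n (x - x') = projCoeff e n x - projCoeff e n x' := by
  ext i
  simp [projCoeff, inner_sub_left]

theorem continuous_embedCoeff (e : ℕ → H) : Continuous (embedCoeff e n) :=
  continuous_finsetSum _ fun i _ => (EuclideanSpace.proj i).continuous.smul continuous_const

theorem norm_embedCoeff_add_projCoeff_le (he : Orthonormal ℝ e) (z : EuclideanSpace ℝ (Fin n))
    (x : H) : ‖embedCoeff e n (z + projCoeff e n x)‖ ≤ ‖x‖ + ‖z‖ := by
  rw [norm_embedCoeff he, add_comm ‖x‖]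
  exact (norm_add_le _ _).trans (add_le_add le_rfl (norm_projCoeff_le he x))

theorem norm_embedCoeff_add_projCoeff_sub_le (he : Orthonormal ℝ e)
    (z : EuclideanSpace ℝ (Fin n)) (x x' : H) :
    ‖embedCoeff e n (z + projCoeff e n x) - embedCoeff e n (z + projCoeff e n x')‖
      ≤ ‖x - x'‖ := by
  rw [← embedCoeff_sub, add_sub_add_left_eq_sub, ← projCoeff_sub, norm_embedCoeff he]
  exact norm_projCoeff_le he _

theorem regularization_eq_integral_add (e : ℕ → H) (ρ : EuclideanSpace ℝ (Fin n) → ℝ)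
    (f : H → ℝ) (x : H) :
    regularization e n ρ f x = ∫ z, ρ z * f (embedCoeff e n (z + projCoeff e n x)) := by
  rw [regularization, ← integral_add_right_eq_self _ (projCoeff e n x)]
  simp only [add_sub_cancel_right]

end Coefficients

theorem abs_sub_le_of_polyWeight_lipschitz_of_norm_le {E : Type*} [SeminormedAddCommGroup E]
    {f : E → ℝ} {r c β : ℝ} (hr : 0 ≤ r) (hc : 0 ≤ c) (hβ : 0 ≤ β)
    (hf : ∀ x x', |f x - f x'| ≤ (c + β / 2 * ‖x‖ ^ r + β / 2 * ‖x'‖ ^ r) * ‖x - x'‖)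
    {u u' : E} {a a' d : ℝ} (hu : ‖u‖ ≤ a) (hu' : ‖u'‖ ≤ a') (hd : ‖u - u'‖ ≤ d) :
    |f u - f u'| ≤ (c + β / 2 * a ^ r + β / 2 * a' ^ r) * d := by
  have ha := Real.rpow_le_rpow (norm_nonneg u) hu hr
  have ha' := Real.rpow_le_rpow (norm_nonneg u') hu' hr
  have hw : 0 ≤ c + β / 2 * ‖u‖ ^ r + β / 2 * ‖u'‖ ^ r := by positivity
  have hle : c + β / 2 * ‖u‖ ^ r + β / 2 * ‖u'‖ ^ r ≤ c + β / 2 * a ^ r + β / 2 * a' ^ r := by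
    gcongr
  exact (hf u u').trans (mul_le_mul hle hd (norm_nonneg _) (hw.trans hle))

theorem regularization_preserves_local_lipschitz_modulus_general
    {H : Type*} [NormedAddCommGroup H] [InnerProductSpace ℝ H]
    (e : ℕ → H) (he : Orthonormal ℝ e) (n : ℕ) (δ : ℝ)
    (ρ : EuclideanSpace ℝ (Fin n) → ℝ) (hint : Integrable ρ)
    (hnonneg : ∀ y, 0 ≤ ρ y) (hsupp : ∀ y, ρ y ≠ 0 → ‖y‖ ≤ δ) (hone : (∫ y, ρ y) = 1)
    (r c β : ℝ) (hr : 0 ≤ r) (hc : 0 ≤ c) (hβ : 0 ≤ β)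
    (f : H → ℝ) (hcont : Continuous f)
    (hf : ∀ x x', |f x - f x'| ≤ (c + β / 2 * ‖x‖ ^ r + β / 2 * ‖x'‖ ^ r) * ‖x - x'‖) :
    ∀ x x' : H,
      |regularization e n ρ f x - regularization e n ρ f x'|
        ≤ (c + β / 2 * (‖x‖ + δ) ^ r + β / 2 * (‖x'‖ + δ) ^ r) * ‖x - x'‖ := by
  have hintegrable : ∀ x : H,
      Integrable fun z => ρ z * f (embedCoeff e n (z + projCoeff e n x)) := fun x =>
    hint.mul_continuous_of_support_subset (isCompact_closedBall 0 δ)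
      (fun z hz => mem_closedBall_zero_iff.2 (hsupp z hz))
      (hcont.comp ((continuous_embedCoeff e).comp (continuous_add_const _)))
  intro x x'
  rw [regularization_eq_integral_add, regularization_eq_integral_add,
    ← integral_sub (hintegrable x) (hintegrable x')]
  simp only [← mul_sub]
  refine abs_integral_mul_le_of_abs_le_on_support hnonneg hint hone fun z hz => ?_
  have hzδ := hsupp z hz
  exact abs_sub_le_of_polyWeight_lipschitz_of_norm_le hr hc hβ hf
    ((norm_embedCoeff_add_projCoeff_le he z x).trans (by gcongr))
    ((norm_embedCoeff_add_projCoeff_le he z x').trans (by gcongr))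
    (norm_embedCoeff_add_projCoeff_sub_le he z x x')

/-- the regularization preserves a locally Lipschitz modulus with
polynomial weight: if `|f(x) - f(x')| ≤ (c + (β/2)‖x‖^r + (β/2)‖x'‖^r) ‖x - x'‖`,
then `|f̃(x) - f̃(x')| ≤ (c + (β/2)(‖x‖+δ)^r + (β/2)(‖x'‖+δ)^r) ‖x - x'‖`. -/
theorem regularization_preserves_local_lipschitz_modulus
    {H : Type*} [NormedAddCommGroup H] [InnerProductSpace ℝ H] [CompleteSpace H]
    [TopologicalSpace.SeparableSpace H]
    (e : ℕ → H) (he : Orthonormal ℝ e) (n : ℕ) (δ : ℝ) (hδ : 0 < δ)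
    (ρ : EuclideanSpace ℝ (Fin n) → ℝ) (hmeas : Measurable ρ) (hint : Integrable ρ)
    (hnonneg : ∀ y, 0 ≤ ρ y) (hsupp : ∀ y, ρ y ≠ 0 → ‖y‖ ≤ δ) (hone : (∫ y, ρ y) = 1)
    (r c β : ℝ) (hr : 0 ≤ r) (hc : 0 ≤ c) (hβ : 0 ≤ β)
    (f : H → ℝ) (hcont : Continuous f)
    (hf : ∀ x x', |f x - f x'| ≤ (c + β / 2 * ‖x‖ ^ r + β / 2 * ‖x'‖ ^ r) * ‖x - x'‖) :
    ∀ x x' : H,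
      |regularization e n ρ f x - regularization e n ρ f x'|
        ≤ (c + β / 2 * (‖x‖ + δ) ^ r + β / 2 * (‖x'‖ + δ) ^ r) * ‖x - x'‖ :=
  regularization_preserves_local_lipschitz_modulus_general e he n δ ρ hint hnonneg hsupp hone r c β
    hr hc hβ f hcont hf
end
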